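/- For every integer n ≥ 2, the function h_T(a) = 2·cosh(a) · ∫_1^∞ (t^{2n−2} − 1)^{−1/2} · (cosh²(a)·t² − 1)^{−1/2} dt satisfies lim_{a→0⁺} h_T(a) = +∞ and lim_{a→∞} h_T(a) = π/(n−1). -/

import Mathlib

/-! Write `c = cosh a` and `m = n - 1`. As `c → ∞`, `c / √(c²t² - 1) = 1 / √(t² - c⁻²)` tends
to `1 / t` with domination, so `h_T` tends to `2 ∫₁^∞ dt / (t √(t^{2m} - 1)) = π / m`, an
antiderivative being `arccos (t^{-m}) / m`. As `c → 1⁺`, the integrand on `(1, 2]` is at least a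
constant times `1 / (t - 1 + (c² - 1))`, whose integral `log (c² / (c² - 1))` blows up. -/

open MeasureTheory Real Set Filter Topology

lemma sqrt_pow_sub_one_pos {k : ℕ} (hk : k ≠ 0) {t : ℝ} (ht : 1 < t) : 0 < √(t ^ k - 1) :=
  sqrt_pos.2 (sub_pos.2 (one_lt_pow₀ ht hk))

lemma hasDerivAt_arccos_inv_pow_div {m : ℕ} (hm : m ≠ 0) {x : ℝ} (hx : 1 < x) :
    HasDerivAt (fun t => arccos (t ^ m)⁻¹ / m) (1 / (x * √(x ^ (2 * m) - 1))) x := by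
  have hxm : 1 < x ^ m := one_lt_pow₀ hx hm
  have hP := sqrt_pow_sub_one_pos (by omega : 2 * m ≠ 0) hx
  have hsqrt : √(1 - ((x ^ m)⁻¹) ^ 2) = √(x ^ (2 * m) - 1) / x ^ m := by
    rw [← sqrt_sq (by positivity : 0 ≤ x ^ m), ← sqrt_div' _ (by positivity),
      sqrt_sq (by positivity)]
    congr 1
    field_simp
    ring
  have hinv : HasDerivAt (fun t => (t ^ m)⁻¹) (-(m * x ^ (m - 1)) / (x ^ m) ^ 2) x :=
    (hasDerivAt_pow m x).inv (by positivity)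
  have hinv_pos : 0 < (x ^ m)⁻¹ := by positivity
  refine (((hasDerivAt_arccos (by linarith) (inv_lt_one_of_one_lt₀ hxm).ne).comp x
    hinv).div_const (m : ℝ)).congr_deriv ?_
  rw [hsqrt]
  field_simp
  exact pow_sub_one_mul hm x

lemma tendsto_arccos_inv_pow_atTop {m : ℕ} (hm : m ≠ 0) :
    Tendsto (fun t : ℝ => arccos (t ^ m)⁻¹) atTop (𝓝 (π / 2)) := by
  rw [← arccos_zero]
  exact (continuous_arccos.tendsto 0).comp (tendsto_pow_atTop hm).inv_tendsto_atTop

lemma continuousAt_arccos_inv_pow_div (m : ℕ) {x : ℝ} (hx : x ≠ 0) :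
    ContinuousAt (fun t => arccos (t ^ m)⁻¹ / m) x :=
  (continuousAt_id.pow m |>.inv₀ (pow_ne_zero m hx) |>.arccos |>.div_const _)

lemma one_div_mul_sqrt_pow_sub_one_nonneg (m : ℕ) {t : ℝ} (ht : 0 ≤ t) :
    0 ≤ 1 / (t * √(t ^ (2 * m) - 1)) := by
  positivity

theorem integrableOn_one_div_mul_sqrt_pow_sub_one {m : ℕ} (hm : m ≠ 0) :
    IntegrableOn (fun t => 1 / (t * √(t ^ (2 * m) - 1))) (Ioi 1) :=
  integrableOn_Ioi_deriv_of_nonneg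
    (continuousAt_arccos_inv_pow_div m one_ne_zero).continuousWithinAt
    (fun _ hx => hasDerivAt_arccos_inv_pow_div hm hx)
    (fun _ hx => one_div_mul_sqrt_pow_sub_one_nonneg m (zero_le_one.trans hx.out.le))
    ((tendsto_arccos_inv_pow_atTop hm).div_const _)

theorem integral_one_div_mul_sqrt_pow_sub_one {m : ℕ} (hm : m ≠ 0) :
    ∫ t in Ioi 1, 1 / (t * √(t ^ (2 * m) - 1)) = π / (2 * m) := by
  rw [integral_Ioi_of_hasDerivAt_of_nonneg
    (continuousAt_arccos_inv_pow_div m one_ne_zero).continuousWithinAt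
    (fun _ hx => hasDerivAt_arccos_inv_pow_div hm hx)
    (fun _ hx => one_div_mul_sqrt_pow_sub_one_nonneg m (zero_le_one.trans hx.out.le))
    ((tendsto_arccos_inv_pow_atTop hm).div_const _)]
  simp only [one_pow, inv_one, arccos_one, zero_div, sub_zero]
  ring

noncomputable def heightIntegrand (m : ℕ) (c t : ℝ) : ℝ :=
  1 / (√(t ^ (2 * m) - 1) * √(c ^ 2 * t ^ 2 - 1))

-- `h_T(a) = height (n - 1) (cosh a)`.
noncomputable def height (m : ℕ) (c : ℝ) : ℝ :=
  2 * c * ∫ t in Ioi 1, heightIntegrand m c t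

lemma heightIntegrand_nonneg (m : ℕ) (c t : ℝ) : 0 ≤ heightIntegrand m c t := by
  unfold heightIntegrand; positivity

lemma measurable_heightIntegrand (m : ℕ) (c : ℝ) : Measurable (heightIntegrand m c) := by
  unfold heightIntegrand; fun_prop

lemma sqrt_sq_sub_one_mul_le (c : ℝ) {t : ℝ} (ht : 1 ≤ t) :
    √(c ^ 2 - 1) * t ≤ √(c ^ 2 * t ^ 2 - 1) := by
  have ht' : √(c ^ 2 - 1) * t = √((c ^ 2 - 1) * t ^ 2) := by
    rw [sqrt_mul' _ (sq_nonneg t), sqrt_sq (by linarith)]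
  rw [ht']
  exact sqrt_le_sqrt (by nlinarith)

lemma sqrt_sq_sub_one_mul_heightIntegrand_le {m : ℕ} (hm : m ≠ 0) {c t : ℝ} (hc : 1 < c)
    (ht : 1 < t) :
    √(c ^ 2 - 1) * heightIntegrand m c t ≤ 1 / (t * √(t ^ (2 * m) - 1)) := by
  have hP := sqrt_pow_sub_one_pos (by omega : 2 * m ≠ 0) ht
  have hct : 1 < c * t := one_lt_mul_of_lt_of_le hc ht.le
  have hQ : 0 < √(c ^ 2 * t ^ 2 - 1) := sqrt_pos.2 (by nlinarith)
  rw [heightIntegrand, mul_one_div, div_le_div_iff₀ (by positivity) (by positivity), one_mul,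
    mul_comm t, mul_left_comm]
  exact mul_le_mul_of_nonneg_left (sqrt_sq_sub_one_mul_le c ht.le) hP.le

theorem integrableOn_heightIntegrand {m : ℕ} (hm : m ≠ 0) {c : ℝ} (hc : 1 < c) :
    IntegrableOn (heightIntegrand m c) (Ioi 1) := by
  have hs : 0 < √(c ^ 2 - 1) := sqrt_pos.2 (by nlinarith)
  refine ((integrableOn_one_div_mul_sqrt_pow_sub_one hm).const_mul (√(c ^ 2 - 1))⁻¹).mono'
    (measurable_heightIntegrand m c).aestronglyMeasurable ?_
  refine (ae_restrict_iff' measurableSet_Ioi).2 (Eventually.of_forall fun t ht => ?_)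
  rw [norm_of_nonneg (heightIntegrand_nonneg m c t), le_inv_mul_iff₀ hs]
  exact sqrt_sq_sub_one_mul_heightIntegrand_le hm hc ht

lemma mul_heightIntegrand_le {m : ℕ} (hm : m ≠ 0) {c t : ℝ} (hc : 2 ≤ c) (ht : 1 < t) :
    c * heightIntegrand m c t ≤ 2 * (1 / (t * √(t ^ (2 * m) - 1))) := by
  have hc2 : c ≤ 2 * √(c ^ 2 - 1) := by
    rw [← div_le_iff₀' two_pos, le_sqrt (by positivity) (by nlinarith)]
    nlinarith
  calc c * heightIntegrand m c t ≤ 2 * √(c ^ 2 - 1) * heightIntegrand m c t :=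
        mul_le_mul_of_nonneg_right hc2 (heightIntegrand_nonneg m c t)
    _ ≤ _ := by
      rw [mul_assoc]
      gcongr
      exact sqrt_sq_sub_one_mul_heightIntegrand_le hm (by linarith) ht

lemma mul_heightIntegrand_eq (m : ℕ) {c t : ℝ} (hc : 0 < c) :
    c * heightIntegrand m c t = 1 / (√(t ^ (2 * m) - 1) * √(t ^ 2 - c⁻¹ ^ 2)) := by
  have hQ : c ^ 2 * t ^ 2 - 1 = c ^ 2 * (t ^ 2 - c⁻¹ ^ 2) := by field_simp
  rw [heightIntegrand, hQ, sqrt_mul (sq_nonneg c), sqrt_sq hc.le, mul_one_div, mul_left_comm,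
    div_mul_cancel_left₀ hc.ne', one_div]

theorem tendsto_integral_mul_heightIntegrand_atTop {m : ℕ} (hm : m ≠ 0) :
    Tendsto (fun c => ∫ t in Ioi 1, c * heightIntegrand m c t) atTop (𝓝 (π / (2 * m))) := by
  rw [← integral_one_div_mul_sqrt_pow_sub_one hm]
  refine tendsto_integral_filter_of_dominated_convergence _
    (Eventually.of_forall fun c =>
      ((measurable_heightIntegrand m c).const_mul c).aestronglyMeasurable)
    ?_ ((integrableOn_one_div_mul_sqrt_pow_sub_one hm).const_mul 2) ?_
  · filter_upwards [eventually_ge_atTop 2] with c hc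
    refine (ae_restrict_iff' measurableSet_Ioi).2 (Eventually.of_forall fun t ht => ?_)
    rw [norm_of_nonneg (mul_nonneg (by linarith) (heightIntegrand_nonneg m c t))]
    exact mul_heightIntegrand_le hm hc ht
  · refine (ae_restrict_iff' measurableSet_Ioi).2 (Eventually.of_forall fun t (ht : 1 < t) => ?_)
    have hP := sqrt_pow_sub_one_pos (by omega : 2 * m ≠ 0) ht
    have hlim : Tendsto (fun c : ℝ => 1 / (√(t ^ (2 * m) - 1) * √(t ^ 2 - c⁻¹ ^ 2))) atTop
        (𝓝 (1 / (√(t ^ (2 * m) - 1) * √(t ^ 2 - 0 ^ 2)))) := by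
      refine tendsto_const_nhds.div (tendsto_const_nhds.mul
        (tendsto_const_nhds.sub (tendsto_inv_atTop_zero.pow 2)).sqrt) ?_
      rw [zero_pow two_ne_zero, sub_zero, sqrt_sq (by linarith)]
      positivity
    rw [zero_pow two_ne_zero, sub_zero, sqrt_sq (by linarith), mul_comm _ t] at hlim
    refine hlim.congr' ?_
    filter_upwards [eventually_gt_atTop 0] with c hc using (mul_heightIntegrand_eq m hc).symm

theorem tendsto_height_atTop {m : ℕ} (hm : m ≠ 0) : Tendsto (height m) atTop (𝓝 (π / m)) := by
  convert (tendsto_integral_mul_heightIntegrand_atTop hm).const_mul 2 using 1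
  · funext c
    rw [height, integral_const_mul, mul_assoc]
  · field_simp

lemma pow_sub_one_le_mul_sub_one (k : ℕ) {t b : ℝ} (ht : 1 ≤ t) (htb : t ≤ b) :
    t ^ k - 1 ≤ k * b ^ (k - 1) * (t - 1) := by
  have h := abs_pow_sub_pow_le t 1 k
  rw [one_pow, abs_one, abs_of_nonneg (by linarith : 0 ≤ t - 1),
    abs_of_nonneg (by linarith : 0 ≤ t), max_eq_left ht] at h
  calc t ^ k - 1 ≤ |t ^ k - 1| := le_abs_self _
    _ ≤ (t - 1) * k * t ^ (k - 1) := h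
    _ ≤ (t - 1) * k * b ^ (k - 1) := by gcongr
    _ = k * b ^ (k - 1) * (t - 1) := by ring

lemma exists_inv_mul_inv_sub_le_heightIntegrand {m : ℕ} (hm : m ≠ 0) :
    ∃ κ > 0, ∀ c ∈ Ioo 1 2, ∀ t ∈ Ioc 1 2, κ⁻¹ * (t - (2 - c ^ 2))⁻¹ ≤ heightIntegrand m c t := by
  set A : ℝ := (2 * m : ℕ) * 2 ^ (2 * m - 1)
  refine ⟨√(12 * A), sqrt_pos.2 (by positivity), fun c ⟨hc1, hc2⟩ t ⟨ht1, ht2⟩ => ?_⟩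
  have hu : 0 < t - (2 - c ^ 2) := by nlinarith
  have hP : t ^ (2 * m) - 1 ≤ A * (t - (2 - c ^ 2)) :=
    (pow_sub_one_le_mul_sub_one _ ht1.le ht2).trans (by gcongr; nlinarith)
  have hQ : c ^ 2 * t ^ 2 - 1 ≤ 12 * (t - (2 - c ^ 2)) := by
    have hc4 : c ^ 2 ≤ 4 := by nlinarith
    have ht3 : t ^ 2 - 1 ≤ 3 * (t - 1) := by nlinarith
    nlinarith [mul_le_mul hc4 ht3 (by nlinarith) (by norm_num)]
  have hP0 : 0 < t ^ (2 * m) - 1 := sub_pos.2 (one_lt_pow₀ ht1 (by omega))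
  have hct : 1 < c * t := one_lt_mul_of_lt_of_le hc1 ht1.le
  have hQ0 : 0 < c ^ 2 * t ^ 2 - 1 := by nlinarith
  have hκu : √(12 * A) * (t - (2 - c ^ 2)) = √(12 * A * (t - (2 - c ^ 2)) ^ 2) := by
    rw [sqrt_mul (by positivity : (0:ℝ) ≤ 12 * A) ((t - (2 - c ^ 2)) ^ 2), sqrt_sq hu.le]
  have hPQ : √(t ^ (2 * m) - 1) * √(c ^ 2 * t ^ 2 - 1) ≤ √(12 * A) * (t - (2 - c ^ 2)) := by
    rw [← sqrt_mul hP0.le, hκu]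
    exact sqrt_le_sqrt (by nlinarith [mul_le_mul hP hQ hQ0.le (by positivity)])
  rw [← mul_inv, heightIntegrand, one_div]
  exact inv_anti₀ (by positivity) hPQ

lemma integral_Ioc_inv_sub {a b d : ℝ} (hab : a ≤ b) (hd : d < a) :
    ∫ t in Ioc a b, (t - d)⁻¹ = log ((b - d) / (a - d)) := by
  rw [← intervalIntegral.integral_of_le hab,
    intervalIntegral.integral_comp_sub_right (fun x => x⁻¹) d,
    integral_inv_of_pos (by linarith) (by linarith)]

lemma integrableOn_Ioc_inv_sub {a b d : ℝ} (hd : d < a) :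
    IntegrableOn (fun t => (t - d)⁻¹) (Ioc a b) :=
  ((continuousOn_id.sub continuousOn_const).inv₀ fun _ ht =>
    (sub_pos.2 (hd.trans_le ht.1)).ne').integrableOn_Icc.mono_set Ioc_subset_Icc_self

lemma exists_inv_mul_log_le_height {m : ℕ} (hm : m ≠ 0) :
    ∃ κ > 0, ∀ c ∈ Ioo 1 2, κ⁻¹ * log (c ^ 2 / (c ^ 2 - 1)) ≤ height m c := by
  obtain ⟨κ, hκ, hle⟩ := exists_inv_mul_inv_sub_le_heightIntegrand hm
  refine ⟨κ, hκ, fun c hc => ?_⟩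
  have hc2 : 2 - c ^ 2 < 1 := by nlinarith [hc.1]
  have hint := integrableOn_heightIntegrand hm hc.1
  calc κ⁻¹ * log (c ^ 2 / (c ^ 2 - 1)) = ∫ t in Ioc 1 2, κ⁻¹ * (t - (2 - c ^ 2))⁻¹ := by
        rw [integral_const_mul, integral_Ioc_inv_sub one_le_two hc2]
        ring_nf
    _ ≤ ∫ t in Ioc 1 2, heightIntegrand m c t :=
        setIntegral_mono_on ((integrableOn_Ioc_inv_sub hc2).const_mul _)
          (hint.mono_set Ioc_subset_Ioi_self) measurableSet_Ioc (hle c hc)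
    _ ≤ ∫ t in Ioi 1, heightIntegrand m c t :=
        setIntegral_mono_set hint (Eventually.of_forall (heightIntegrand_nonneg m c))
          Ioc_subset_Ioi_self.eventuallyLE
    _ ≤ height m c :=
        le_mul_of_one_le_left (integral_nonneg (heightIntegrand_nonneg m c)) (by linarith [hc.1])

theorem tendsto_height_nhdsGT_one {m : ℕ} (hm : m ≠ 0) : Tendsto (height m) (𝓝[>] 1) atTop := by
  obtain ⟨κ, hκ, hle⟩ := exists_inv_mul_log_le_height hm
  have hsq : Tendsto (fun c : ℝ => c ^ 2) (𝓝[>] 1) (𝓝 1) :=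
    ((continuous_pow 2).tendsto' 1 1 (one_pow 2)).mono_left nhdsWithin_le_nhds
  have hsq_sub : Tendsto (fun c : ℝ => c ^ 2 - 1) (𝓝[>] 1) (𝓝[>] 0) := by
    refine tendsto_nhdsWithin_iff.2 ⟨by simpa using hsq.sub_const 1, ?_⟩
    filter_upwards [self_mem_nhdsWithin] with c (hc : 1 < c)
    exact sub_pos.2 (one_lt_pow₀ hc two_ne_zero)
  have hlog : Tendsto (fun c : ℝ => κ⁻¹ * log (c ^ 2 / (c ^ 2 - 1))) (𝓝[>] 1) atTop := by
    simp only [div_eq_mul_inv]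
    exact (tendsto_log_atTop.comp (hsq.pos_mul_atTop one_pos
      (tendsto_inv_nhdsGT_zero.comp hsq_sub))).const_mul_atTop (inv_pos.2 hκ)
  exact tendsto_atTop_mono' _ (by filter_upwards [Ioo_mem_nhdsGT one_lt_two] using hle) hlog

lemma Real.tendsto_cosh_atTop : Tendsto cosh atTop atTop :=
  tendsto_atTop_mono (fun x => by rw [cosh_eq]; linarith [exp_pos (-x)])
    (tendsto_exp_atTop.atTop_div_const two_pos)

lemma Real.tendsto_cosh_nhdsGT_zero : Tendsto cosh (𝓝[>] 0) (𝓝[>] 1) :=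
  tendsto_nhdsWithin_iff.2 ⟨(continuous_cosh.tendsto' 0 1 cosh_zero).mono_left nhdsWithin_le_nhds,
    by filter_upwards [self_mem_nhdsWithin] with a (ha : 0 < a) using one_lt_cosh.2 ha.ne'⟩

/-- the height
`h_T(a) = 2 cosh(a) ∫_1^∞ (t^{2n-2}-1)^{-1/2} (cosh²(a)t²-1)^{-1/2} dt`
satisfies `h_T(a) → +∞` as `a → 0⁺` and `h_T(a) → π/(n-1)` as `a → ∞`. -/
theorem stmt_18 (n : ℕ) (hn : 2 ≤ n) :
    Filter.Tendsto
      (fun a => 2 * Real.cosh a *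
        ∫ t in Set.Ioi (1 : ℝ),
          1 / (Real.sqrt (t ^ (2 * n - 2) - 1) * Real.sqrt (Real.cosh a ^ 2 * t ^ 2 - 1)))
      (nhdsWithin 0 (Set.Ioi 0)) Filter.atTop ∧
    Filter.Tendsto
      (fun a => 2 * Real.cosh a *
        ∫ t in Set.Ioi (1 : ℝ),
          1 / (Real.sqrt (t ^ (2 * n - 2) - 1) * Real.sqrt (Real.cosh a ^ 2 * t ^ 2 - 1)))
      Filter.atTop (nhds (Real.pi / ((n : ℝ) - 1))) := by
  have hm : n - 1 ≠ 0 := by omega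
  have h_eq : (fun a => 2 * cosh a * ∫ t in Ioi (1 : ℝ),
      1 / (√(t ^ (2 * n - 2) - 1) * √(cosh a ^ 2 * t ^ 2 - 1))) = height (n - 1) ∘ cosh := by
    funext a
    simp only [Function.comp, height, heightIntegrand, show 2 * n - 2 = 2 * (n - 1) by omega]
  have h_cast : (n : ℝ) - 1 = ((n - 1 : ℕ) : ℝ) := by rw [Nat.cast_sub (by omega), Nat.cast_one]
  rw [h_eq, h_cast]
  exact ⟨(tendsto_height_nhdsGT_one hm).comp tendsto_cosh_nhdsGT_zero,
    (tendsto_height_atTop hm).comp tendsto_cosh_atTop⟩
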